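/- Let n ≥ 2 be an integer and let κ, λ ∈ ℝ satisfy the ball-condition (κ > 0, or κ = 0 and λ > 0, or κ < 0 and λ > √|κ|). Let φ : ℝ → ℝ be twice differentiable with φ''(s) = −κ·φ(s) for all s, φ(0) = 1, φ'(0) = −λ, and set C_{κ,λ} := inf{t > 0 : φ(t) = 0}. Let S > 0 and let F : (0, S) → ℝ be differentiable with F'(s) ≥ (n−1)κ + F(s)²/(n−1) for all s ∈ (0, S) and liminf_{s→0⁺} F(s) ≥ (n−1)λ. Then S ≤ C_{κ,λ}. -/

import Mathlib

/-!
The Jacobi solution turns into a solution `g = -φ'/φ` of the Riccati equation `g' = κ + g²`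
with `g 0 = λ`; by the energy identity `φ'² + κ φ² = λ² + κ > 0`, `φ'` is negative at the first
zero `C` of `φ`, so `g → +∞` as `t → C⁻`. If `C < S`, shift `g` slightly to the right: since
`g'(0) = κ + λ² > 0`, `(n-1) g` starts strictly below `F` at some small `s₀` and still blows up
before `S`. A supersolution of the Riccati equation that starts strictly above a solution stays
above it (their difference `h` satisfies `h' ≥ q h`, so `h · exp (-∫ q)` is nondecreasing),
forcing `F → +∞` at a point of `(0, S)` where `F` is continuous.

That `φ` has a positive zero is where the ball condition enters: for `κ > 0`, `φ` is concave
while positive, and for `κ ≤ 0 < λ` the energy identity keeps `φ' ≤ -√(λ² + κ)`.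
-/

open Set Filter Topology

lemma IsPreconnected.pos_of_ne_zero {s : Set ℝ} (hs : IsPreconnected s) {f : ℝ → ℝ}
    (hf : ContinuousOn f s) {a : ℝ} (ha : a ∈ s) (hfa : 0 < f a) (hne : ∀ x ∈ s, f x ≠ 0) :
    ∀ x ∈ s, 0 < f x := by
  intro x hx
  by_contra! hfx
  obtain ⟨y, hy, hy0⟩ := hs.intermediate_value hx ha hf ⟨hfx, hfa.le⟩
  exact hne y hy hy0

lemma exists_ge_neg_of_deriv_le_neg {f : ℝ → ℝ} (hf : Differentiable ℝ f) {c t₀ : ℝ}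
    (hc : 0 < c) (hd : ∀ t ≥ t₀, deriv f t ≤ -c) : ∃ t ≥ t₀, f t < 0 := by
  set t := t₀ + (|f t₀| + 1) / c
  have ht : t₀ ≤ t := le_add_of_nonneg_right (by positivity)
  have hmvt := (convex_Ici t₀).image_sub_le_mul_sub_of_deriv_le hf.continuous.continuousOn
    hf.differentiableOn (fun x hx => hd x (interior_subset hx)) t₀ self_mem_Ici t ht ht
  have hdrop : -c * (t - t₀) = -(|f t₀| + 1) := by simp only [t]; field_simp; ring
  exact ⟨t, ht, by linarith [le_abs_self (f t₀)]⟩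

lemma HasDerivAt.eventually_nhdsLT_lt {f : ℝ → ℝ} {f' x : ℝ} (hf : HasDerivAt f f' x)
    (hf' : 0 < f') : ∀ᶠ t in 𝓝[<] x, f t < f x := by
  have hslope := (hasDerivAt_iff_tendsto_slope.mp hf).mono_left (nhdsLT_le_nhdsNE x)
  filter_upwards [hslope.eventually (eventually_gt_nhds hf'), self_mem_nhdsWithin] with t ht htx
  exact (slope_pos_iff_gt htx).mp ht

lemma HasDerivAt.eventually_nhdsLT_gt {f : ℝ → ℝ} {f' x : ℝ} (hf : HasDerivAt f f' x)
    (hf' : f' < 0) : ∀ᶠ t in 𝓝[<] x, f x < f t := by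
  simpa using hf.neg.eventually_nhdsLT_lt (neg_pos.mpr hf')

lemma tendsto_sub_const_nhdsLT (a b : ℝ) :
    Tendsto (fun x => x - a) (𝓝[<] (b + a)) (𝓝[<] b) := by
  simpa using (continuous_sub_right a).continuousWithinAt.tendsto_nhdsWithin
    (x := b + a) (s := Iio (b + a)) (t := Iio b) fun _ hx => mem_Iio.2 (sub_lt_iff_lt_add.mpr hx)

lemma tendsto_neg_logDeriv_nhdsLT_atTop {f : ℝ → ℝ} {x : ℝ} (hd : ContinuousAt (deriv f) x)
    (hfx : f x = 0) (hf'x : deriv f x < 0) :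
    Tendsto (fun t => -logDeriv f t) (𝓝[<] x) atTop := by
  have hf := (differentiableAt_of_deriv_ne_zero hf'x.ne).hasDerivAt
  have hf0 : Tendsto f (𝓝[<] x) (𝓝[>] 0) := tendsto_nhdsWithin_iff.mpr
    ⟨hfx ▸ hf.continuousAt.tendsto.mono_left nhdsWithin_le_nhds,
      by simpa [hfx] using hf.eventually_nhdsLT_gt hf'x⟩
  refine (Tendsto.pos_mul_atTop (neg_pos.mpr hf'x) (hd.tendsto.neg.mono_left nhdsWithin_le_nhds)
    (tendsto_inv_nhdsGT_zero.comp hf0)).congr fun t => ?_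
  simp [logDeriv_apply, div_eq_mul_inv]

theorem mul_exp_integral_le_of_mul_le_deriv {h q : ℝ → ℝ} {a b : ℝ} (hab : a ≤ b)
    (hq : ContinuousOn q (Icc a b)) (hh : ContinuousOn h (Icc a b))
    (hh' : DifferentiableOn ℝ h (Ioo a b)) (hqh : ∀ x ∈ Ioo a b, q x * h x ≤ deriv h x) :
    h a * Real.exp (∫ x in a..b, q x) ≤ h b := by
  set Q : ℝ → ℝ := fun x => ∫ t in a..x, q t
  have hQ : ContinuousOn Q (Icc a b) := by
    rw [← uIcc_of_le hab] at hq ⊢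
    exact intervalIntegral.continuousOn_primitive_interval hq.integrableOn_uIcc
  have hQ' : ∀ x ∈ Ioo a b, HasDerivAt Q (q x) x := fun x hx =>
    intervalIntegral.integral_hasDerivAt_right
      ((hq.mono (Icc_subset_Icc_right hx.2.le)).intervalIntegrable_of_Icc hx.1.le)
      ((hq.mono Ioo_subset_Icc_self).stronglyMeasurableAtFilter isOpen_Ioo x hx)
      (hq.continuousAt (Icc_mem_nhds hx.1 hx.2))
  have hP' : ∀ x ∈ Ioo a b, HasDerivAt (fun x => h x * Real.exp (-Q x))
      ((deriv h x - q x * h x) * Real.exp (-Q x)) x := fun x hx => by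
    refine ((hh'.differentiableAt (Ioo_mem_nhds hx.1 hx.2)).hasDerivAt.fun_mul
      (hQ' x hx).fun_neg.exp).congr_deriv ?_
    ring
  have hP : MonotoneOn (fun x => h x * Real.exp (-Q x)) (Icc a b) := by
    refine monotoneOn_of_deriv_nonneg (convex_Icc a b) (hh.mul hQ.neg.rexp) ?_ ?_ <;>
      rw [interior_Icc]
    · exact fun x hx => (hP' x hx).differentiableAt.differentiableWithinAt
    · intro x hx
      rw [(hP' x hx).deriv]
      exact mul_nonneg (sub_nonneg.mpr (hqh x hx)) (Real.exp_pos _).le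
  have hab' := hP (left_mem_Icc.2 hab) (right_mem_Icc.2 hab) hab
  simp only [Q, intervalIntegral.integral_same, neg_zero, Real.exp_zero, mul_one] at hab'
  calc h a * Real.exp (Q b) ≤ h b * Real.exp (-Q b) * Real.exp (Q b) := by gcongr
    _ = h b := by rw [mul_assoc, ← Real.exp_add, neg_add_cancel, Real.exp_zero, mul_one]

theorem riccati_lt_of_lt {m c : ℝ} {F G : ℝ → ℝ} {a b : ℝ} (hab : a ≤ b)
    (hF : ∀ x ∈ Icc a b, DifferentiableAt ℝ F x) (hG : ∀ x ∈ Icc a b, DifferentiableAt ℝ G x)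
    (hF' : ∀ x ∈ Ioo a b, c + F x ^ 2 / m ≤ deriv F x)
    (hG' : ∀ x ∈ Ioo a b, deriv G x ≤ c + G x ^ 2 / m) (h : G a < F a) : G b < F b := by
  have hcont {u : ℝ → ℝ} (hu : ∀ x ∈ Icc a b, DifferentiableAt ℝ u x) :
      ContinuousOn u (Icc a b) := fun x hx => (hu x hx).continuousAt.continuousWithinAt
  -- `(F - G)' ≥ (F² - G²) / m = (F + G) / m * (F - G)`
  have hgrowth := mul_exp_integral_le_of_mul_le_deriv (h := fun x => F x - G x)
    (q := fun x => (F x + G x) / m) hab (((hcont hF).add (hcont hG)).div_const m)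
    ((hcont hF).sub (hcont hG))
    (fun x hx => ((hF x (Ioo_subset_Icc_self hx)).sub
      (hG x (Ioo_subset_Icc_self hx))).differentiableWithinAt)
    (fun x hx => by
      rw [deriv_fun_sub (hF x (Ioo_subset_Icc_self hx)) (hG x (Ioo_subset_Icc_self hx))]
      linarith [hF' x hx, hG' x hx,
        show (F x + G x) / m * (F x - G x) = F x ^ 2 / m - G x ^ 2 / m by ring])
  linarith [mul_pos (sub_pos.2 h) (Real.exp_pos (∫ x in a..b, (F x + G x) / m))]

theorem not_tendsto_atTop_of_riccati {m c : ℝ} {F G : ℝ → ℝ} {a b : ℝ} (hab : a < b)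
    (hF : ∀ x ∈ Icc a b, DifferentiableAt ℝ F x)
    (hF' : ∀ x ∈ Ioo a b, c + F x ^ 2 / m ≤ deriv F x)
    (hG : ∀ x ∈ Ico a b, HasDerivAt G (c + G x ^ 2 / m) x) (h : G a < F a) :
    ¬ Tendsto G (𝓝[<] b) atTop := by
  intro hGb
  have hlt : ∀ x ∈ Ico a b, G x < F x := fun x hx =>
    riccati_lt_of_lt hx.1 (fun y hy => hF y ⟨hy.1, hy.2.trans hx.2.le⟩)
      (fun y hy => (hG y ⟨hy.1, hy.2.trans_lt hx.2⟩).differentiableAt)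
      (fun y hy => hF' y ⟨hy.1, hy.2.trans hx.2⟩)
      (fun y hy => (hG y ⟨hy.1.le, hy.2.trans hx.2⟩).deriv.le) h
  have hFb : Tendsto F (𝓝[<] b) atTop :=
    tendsto_atTop_mono' _ (eventually_of_mem (Ico_mem_nhdsLT hab) fun x hx => (hlt x hx).le) hGb
  exact not_tendsto_atTop_of_tendsto_nhds
    ((hF b (right_mem_Icc.2 hab.le)).continuousAt.tendsto.mono_left nhdsWithin_le_nhds) hFb

def BallCondition (κ lam : ℝ) : Prop :=
  0 < κ ∨ (κ = 0 ∧ 0 < lam) ∨ (κ < 0 ∧ Real.sqrt |κ| < lam)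

namespace BallCondition

variable {κ lam : ℝ}

lemma sq_add_pos (h : BallCondition κ lam) : 0 < lam ^ 2 + κ := by
  rcases h with hκ | ⟨rfl, hl⟩ | ⟨hκ, hl⟩
  · positivity
  · positivity
  · have hsq := Real.sq_sqrt (abs_nonneg κ)
    rw [abs_of_neg hκ] at hsq hl
    nlinarith [Real.sqrt_nonneg (-κ)]

lemma pos_of_nonpos (h : BallCondition κ lam) (hκ : κ ≤ 0) : 0 < lam := by
  rcases h with hκ' | ⟨-, hl⟩ | ⟨-, hl⟩
  · exact absurd hκ (not_le.2 hκ')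
  · exact hl
  · exact (Real.sqrt_nonneg _).trans_lt hl

end BallCondition

theorem sInf_pos_zeros_spec {f : ℝ → ℝ} (hf : Continuous f) (h0 : 0 < f 0)
    (hz : ∃ t, 0 < t ∧ f t = 0) {C : ℝ} (hC : C = sInf {t | 0 < t ∧ f t = 0}) :
    0 < C ∧ f C = 0 ∧ ∀ t ∈ Ico 0 C, 0 < f t := by
  have hbdd : BddBelow {t | 0 < t ∧ f t = 0} := ⟨0, fun _ ht => ht.1.le⟩
  have hZ : {t | 0 < t ∧ f t = 0} = Ici 0 ∩ f ⁻¹' {0} := by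
    ext t
    refine ⟨fun ht => ⟨ht.1.le, ht.2⟩, fun ht => ⟨ht.1.lt_of_ne ?_, ht.2⟩⟩
    rintro rfl
    exact h0.ne' ht.2
  have hCZ : C ∈ {t | 0 < t ∧ f t = 0} := by
    have hne : {t | 0 < t ∧ f t = 0}.Nonempty := hz
    rw [hZ] at hne hbdd
    rw [hC, hZ]
    exact (isClosed_Ici.inter (isClosed_singleton.preimage hf)).csInf_mem hne hbdd
  refine ⟨hCZ.1, hCZ.2, isPreconnected_Ico.pos_of_ne_zero hf.continuousOn
    (left_mem_Ico.2 hCZ.1) h0 fun t ht hft => ?_⟩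
  rcases ht.1.eq_or_lt with rfl | htpos
  · exact h0.ne' hft
  · exact (csInf_le hbdd ⟨htpos, hft⟩).not_gt (hC ▸ ht.2)

section Jacobi

variable {κ lam : ℝ} {φ : ℝ → ℝ}

theorem jacobi_energy_eq (hφ : Differentiable ℝ φ) (hφ' : Differentiable ℝ (deriv φ))
    (hode : ∀ s, deriv (deriv φ) s = -κ * φ s) (s t : ℝ) :
    deriv φ s ^ 2 + κ * φ s ^ 2 = deriv φ t ^ 2 + κ * φ t ^ 2 := by
  have hE (x : ℝ) : HasDerivAt (fun x => deriv φ x ^ 2 + κ * φ x ^ 2) 0 x := by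
    refine (((hφ' x).hasDerivAt.pow 2).add
      (((hφ x).hasDerivAt.pow 2).const_mul κ)).congr_deriv ?_
    rw [hode]
    ring
  exact is_const_of_deriv_eq_zero (fun x => (hE x).differentiableAt) (fun x => (hE x).deriv) s t

theorem hasDerivAt_neg_logDeriv (hφ : Differentiable ℝ φ) (hφ' : Differentiable ℝ (deriv φ))
    (hode : ∀ s, deriv (deriv φ) s = -κ * φ s) {t : ℝ} (ht : φ t ≠ 0) :
    HasDerivAt (fun t => -logDeriv φ t) (κ + (-logDeriv φ t) ^ 2) t := by
  refine ((hφ' t).hasDerivAt.div (hφ t).hasDerivAt ht).neg.congr_deriv ?_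
  rw [logDeriv_apply, hode]
  field_simp
  ring

theorem jacobi_exists_neg_of_pos (hφ : Differentiable ℝ φ) (hφ' : Differentiable ℝ (deriv φ))
    (hode : ∀ s, deriv (deriv φ) s = -κ * φ s) (hκ : 0 < κ) (hφ0 : φ 0 = 1) :
    ∃ t ≥ 0, φ t < 0 := by
  by_contra! hnn
  have hanti : AntitoneOn (deriv φ) (Ici 0) :=
    antitoneOn_of_deriv_nonpos (convex_Ici 0) hφ'.continuous.continuousOn hφ'.differentiableOn
      fun t ht => by
        rw [hode]
        nlinarith [hnn t (interior_subset ht)]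
  obtain ⟨t₁, ht₁, hd₁⟩ : ∃ t ≥ 0, deriv φ t < 0 := by
    by_contra! hd
    have hmono : MonotoneOn φ (Ici 0) :=
      monotoneOn_of_deriv_nonneg (convex_Ici 0) hφ.continuous.continuousOn hφ.differentiableOn
        fun t ht => hd t (interior_subset ht)
    -- once `φ ≥ 1`, the equation forces `φ'' ≤ -κ`
    obtain ⟨t, ht, hdt⟩ := exists_ge_neg_of_deriv_le_neg hφ' hκ fun t ht => by
      rw [hode]
      nlinarith [hmono self_mem_Ici ht ht]
    exact (hd t ht).not_gt hdt
  obtain ⟨t, ht, hφt⟩ := exists_ge_neg_of_deriv_le_neg hφ (neg_pos.2 hd₁) fun t ht => by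
    simpa using hanti ht₁ (ht₁.trans ht) ht
  exact (hnn t (ht₁.trans ht)).not_gt hφt

theorem jacobi_exists_neg_of_nonpos (hφ : Differentiable ℝ φ)
    (hφ' : Differentiable ℝ (deriv φ)) (hode : ∀ s, deriv (deriv φ) s = -κ * φ s) (hκ : κ ≤ 0)
    (hl : 0 < lam) (hE : 0 < lam ^ 2 + κ) (hφ0 : φ 0 = 1) (hφ0' : deriv φ 0 = -lam) :
    ∃ t ≥ 0, φ t < 0 := by
  have henergy (t : ℝ) : lam ^ 2 + κ ≤ deriv φ t ^ 2 := by
    have := jacobi_energy_eq hφ hφ' hode t 0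
    rw [hφ0, hφ0'] at this
    nlinarith [mul_nonpos_of_nonpos_of_nonneg hκ (sq_nonneg (φ t))]
  have hneg := isPreconnected_univ.pos_of_ne_zero hφ'.continuous.neg.continuousOn (mem_univ 0)
    (by simpa [hφ0'] using hl) fun x _ hx => by nlinarith [henergy x, neg_eq_zero.mp hx]
  refine exists_ge_neg_of_deriv_le_neg hφ (Real.sqrt_pos.2 hE) fun t _ => ?_
  have hsqrt := Real.sqrt_le_sqrt (henergy t)
  rw [Real.sqrt_sq_eq_abs, abs_of_neg (neg_pos.mp (hneg t (mem_univ t)))] at hsqrt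
  linarith

theorem jacobi_exists_pos_zero (hφ : Differentiable ℝ φ) (hφ' : Differentiable ℝ (deriv φ))
    (hode : ∀ s, deriv (deriv φ) s = -κ * φ s) (hball : BallCondition κ lam) (hφ0 : φ 0 = 1)
    (hφ0' : deriv φ 0 = -lam) : ∃ t, 0 < t ∧ φ t = 0 := by
  obtain ⟨t, ht, hφt⟩ : ∃ t ≥ 0, φ t < 0 := by
    rcases lt_or_ge 0 κ with hκ | hκ
    · exact jacobi_exists_neg_of_pos hφ hφ' hode hκ hφ0
    · exact jacobi_exists_neg_of_nonpos hφ hφ' hode hκ (hball.pos_of_nonpos hκ) hball.sq_add_pos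
        hφ0 hφ0'
  obtain ⟨u, hu, hu0⟩ := intermediate_value_Icc' ht hφ.continuous.continuousOn
    ⟨hφt.le, hφ0 ▸ zero_le_one⟩
  refine ⟨u, hu.1.lt_of_ne ?_, hu0⟩
  rintro rfl
  simp [hφ0] at hu0

theorem deriv_neg_of_first_zero (hφ : Differentiable ℝ φ) (hφ' : Differentiable ℝ (deriv φ))
    (hode : ∀ s, deriv (deriv φ) s = -κ * φ s) (hE : 0 < lam ^ 2 + κ) (hφ0 : φ 0 = 1)
    (hφ0' : deriv φ 0 = -lam) {C : ℝ} (hC0 : 0 < C) (hφC : φ C = 0)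
    (hpos : ∀ t ∈ Ico 0 C, 0 < φ t) : deriv φ C < 0 := by
  have hsq : deriv φ C ^ 2 = lam ^ 2 + κ := by
    simpa [hφC, hφ0, hφ0'] using jacobi_energy_eq hφ hφ' hode C 0
  refine (le_of_not_gt fun hd => ?_).lt_of_ne fun hd => by rw [hd] at hsq; linarith
  obtain ⟨t, hφt, ht⟩ :=
    (((hφ C).hasDerivAt.eventually_nhdsLT_lt hd).and (Ioo_mem_nhdsLT hC0)).exists
  exact (hpos t ⟨ht.1.le, ht.2⟩).not_gt (hφC ▸ hφt)

theorem exists_riccati_solution_tendsto_atTop (hφ : Differentiable ℝ φ)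
    (hφ' : Differentiable ℝ (deriv φ)) (hode : ∀ s, deriv (deriv φ) s = -κ * φ s)
    (hball : BallCondition κ lam) (hφ0 : φ 0 = 1) (hφ0' : deriv φ 0 = -lam) {C : ℝ}
    (hC : C = sInf {t : ℝ | 0 < t ∧ φ t = 0}) {δ : ℝ} (hδ : 0 < δ) :
    ∃ ν < lam, ∃ T, 0 < T ∧ T < C + δ ∧ ∃ v : ℝ → ℝ, v 0 = ν ∧
      (∀ t ∈ Ico 0 T, HasDerivAt v (κ + v t ^ 2) t) ∧ Tendsto v (𝓝[<] T) atTop := by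
  obtain ⟨hC0, hφC, hpos⟩ := sInf_pos_zeros_spec hφ.continuous (by simp [hφ0])
    (jacobi_exists_pos_zero hφ hφ' hode hball hφ0 hφ0') hC
  set g : ℝ → ℝ := fun t => -logDeriv φ t
  have hg0 : g 0 = lam := by simp [g, logDeriv_apply, hφ0, hφ0']
  obtain ⟨l, u, ⟨hl, hu⟩, hlu⟩ := mem_nhds_iff_exists_Ioo_subset.mp
    (continuousAt_const.eventually_lt hφ.continuous.continuousAt (by simp [hφ0] : (0 : ℝ) < φ 0))
  have hne : ∀ t ∈ Ioo l C, φ t ≠ 0 := fun t ht => by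
    rcases lt_or_ge t 0 with h | h
    · exact (hlu ⟨ht.1, h.trans hu⟩ : 0 < φ t).ne'
    · exact (hpos t ⟨h, ht.2⟩).ne'
  -- `g' (0) = κ + λ² > 0`, so `g` is below `λ` just before `0`
  have hg'0 : 0 < κ + (-logDeriv φ 0) ^ 2 := by
    rw [show -logDeriv φ 0 = lam from hg0]
    linarith [hball.sq_add_pos]
  obtain ⟨t, hgt, ht⟩ := (((hasDerivAt_neg_logDeriv hφ hφ' hode (by simp [hφ0] : φ 0 ≠ 0)
    ).eventually_nhdsLT_lt hg'0).and (Ioo_mem_nhdsLT (max_lt hl (neg_lt_zero.2 hδ)))).exists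
  have hlt := max_lt_iff.mp ht.1
  refine ⟨g t, hg0 ▸ hgt, C + -t, by linarith [ht.2], by linarith, fun s => g (s - -t), by simp,
    fun s hs => ?_, ?_⟩
  · exact (hasDerivAt_neg_logDeriv hφ hφ' hode
      (hne _ ⟨by linarith [hs.1], by linarith [hs.2]⟩)).comp_sub_const s (-t)
  · exact (tendsto_neg_logDeriv_nhdsLT_atTop hφ'.continuous.continuousAt hφC
      (deriv_neg_of_first_zero hφ hφ' hode hball.sq_add_pos hφ0 hφ0' hC0 hφC hpos)).comp
      (tendsto_sub_const_nhdsLT (-t) C)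

end Jacobi

theorem riccati_blowup_bound_general (n : ℕ) (hn : 2 ≤ n) (κ lam : ℝ)
    (hball : 0 < κ ∨ (κ = 0 ∧ 0 < lam) ∨ (κ < 0 ∧ Real.sqrt |κ| < lam))
    (φ : ℝ → ℝ)
    (hφ : Differentiable ℝ φ) (hφ' : Differentiable ℝ (deriv φ))
    (hode : ∀ s : ℝ, deriv (deriv φ) s = -κ * φ s)
    (hφ0 : φ 0 = 1) (hφ0' : deriv φ 0 = -lam)
    (C : ℝ) (hC : C = sInf {t : ℝ | 0 < t ∧ φ t = 0})
    (S : ℝ) (F : ℝ → ℝ)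
    (hF : ∀ s ∈ Set.Ioo (0 : ℝ) S, DifferentiableAt ℝ F s)
    (hF' : ∀ s ∈ Set.Ioo (0 : ℝ) S,
      ((n : ℝ) - 1) * κ + (F s) ^ 2 / ((n : ℝ) - 1) ≤ deriv F s)
    (hliminf : ∀ ε : ℝ, 0 < ε →
      ∀ᶠ s in nhdsWithin (0 : ℝ) (Set.Ioi 0), ((n : ℝ) - 1) * lam - ε ≤ F s) :
    S ≤ C := by
  by_contra! hCS
  set m : ℝ := (n : ℝ) - 1
  have hm : 0 < m := by
    have : (2 : ℝ) ≤ n := by exact_mod_cast hn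
    linarith
  obtain ⟨ν, hν, T, hT0, hTS, v, hv0, hv, hvT⟩ :=
    exists_riccati_solution_tendsto_atTop hφ hφ' hode hball hφ0 hφ0' hC (sub_pos.2 hCS)
  obtain ⟨s₀, hFs₀, hs₀, hs₀T⟩ : ∃ s₀, m * lam - m * (lam - ν) / 2 ≤ F s₀ ∧ s₀ ∈ Ioo 0 (S - T) :=
    ((hliminf _ (half_pos (mul_pos hm (sub_pos.2 hν)))).and
      (Ioo_mem_nhdsGT (by linarith))).exists
  refine not_tendsto_atTop_of_riccati (G := fun s => m * v (s - s₀)) (lt_add_of_pos_left s₀ hT0)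
    (fun s hs => hF s ⟨by linarith [hs.1], by linarith [hs.2]⟩)
    (fun s hs => hF' s ⟨by linarith [hs.1], by linarith [hs.2]⟩) (fun s hs => ?_)
    (by simp only [sub_self, hv0]; nlinarith)
    ((hvT.const_mul_atTop hm).comp (tendsto_sub_const_nhdsLT s₀ T))
  refine ((hv (s - s₀) ⟨by linarith [hs.1], by linarith [hs.2]⟩).comp_sub_const s s₀).const_mul
    m |>.congr_deriv ?_
  field_simp

/-- Under the ball-condition, a solution of the Riccati
differential inequality `F' ≥ (n-1)κ + F²/(n-1)` on `(0, S)` with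
`liminf_{s→0⁺} F(s) ≥ (n-1)λ` cannot exist beyond the least positive zero
`C_{κ,λ}` of the Jacobi solution: `S ≤ C_{κ,λ}`. -/
theorem riccati_blowup_bound (n : ℕ) (hn : 2 ≤ n) (κ lam : ℝ)
    (hball : 0 < κ ∨ (κ = 0 ∧ 0 < lam) ∨ (κ < 0 ∧ Real.sqrt |κ| < lam))
    (φ : ℝ → ℝ)
    (hφ : Differentiable ℝ φ) (hφ' : Differentiable ℝ (deriv φ))
    (hode : ∀ s : ℝ, deriv (deriv φ) s = -κ * φ s)
    (hφ0 : φ 0 = 1) (hφ0' : deriv φ 0 = -lam)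
    (C : ℝ) (hC : C = sInf {t : ℝ | 0 < t ∧ φ t = 0})
    (S : ℝ) (hS : 0 < S) (F : ℝ → ℝ)
    (hF : ∀ s ∈ Set.Ioo (0 : ℝ) S, DifferentiableAt ℝ F s)
    (hF' : ∀ s ∈ Set.Ioo (0 : ℝ) S,
      ((n : ℝ) - 1) * κ + (F s) ^ 2 / ((n : ℝ) - 1) ≤ deriv F s)
    (hliminf : ∀ ε : ℝ, 0 < ε →
      ∀ᶠ s in nhdsWithin (0 : ℝ) (Set.Ioi 0), ((n : ℝ) - 1) * lam - ε ≤ F s) :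
    S ≤ C :=
  riccati_blowup_bound_general n hn κ lam hball φ hφ hφ' hode hφ0 hφ0' C hC S F hF hF' hliminf
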